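/- arXiv:2306.15871 — 2 statements merged into one kernel-verified Lean document; each statement's English description precedes it below -/
import Mathlib

section
/- Top-order equicontinuity suffices in C^m (Corollary 1.10). Let K ⊆ ℝ^d be a compact set that is the closure of a bounded open set satisfying the uniform C^m regularity condition (in the sense of Adams), and let F be a subset of C^m(K). Suppose (a) there exists M > 0 such that ‖f‖_{C^m(K)} ≤ M for every f ∈ F, and (b) for every ε > 0 there exists δ > 0 such that max_{|α|=m} |(D^α f)(x₁) − (D^α f)(x₂)| < ε for every f ∈ F and all x₁, x₂ ∈ K with |x₁ − x₂| < δ. Then F is equicontinuous with all derivatives up to order m, i.e., for every ε > 0 there exists δ' > 0 such that max_{|α|≤m} |(D^α f)(x₁) − (D^α f)(x₂)| < ε for every f ∈ F and all x₁, x₂ ∈ K with |x₁ − x₂| < δ'; consequently F is precompact in C^m(K). -/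
open MeasureTheory Set
open scoped ENNReal NNReal

noncomputable section

abbrev Euc (d : ℕ) : Type := EuclideanSpace ℝ (Fin d)

/-- Multi-indices. -/
abbrev MIdx (d : ℕ) : Type := Fin d → ℕ

/-- The order `|α|` of a multi-index. -/
def mOrder {d : ℕ} (α : MIdx d) : ℕ := ∑ i, α i

/-- Classical partial derivative in direction `i`, within a set `S`. -/
def pderivW {d : ℕ} (i : Fin d) (S : Set (Euc d)) (f : Euc d → ℝ) : Euc d → ℝ :=
  fun x => fderivWithin ℝ f S x (EuclideanSpace.single i 1)

/-- Classical iterated partial derivative `D^α` within a set `S`. -/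
def mderivW {d : ℕ} (α : MIdx d) (S : Set (Euc d)) (f : Euc d → ℝ) : Euc d → ℝ :=
  (List.finRange d).foldr (fun i g => (pderivW i S)^[α i] g) f

/-- The (finite) type of multi-indices of order at most `k`. -/
def Idx (d k : ℕ) : Type := {α : MIdx d // mOrder α ≤ k}

instance (d k : ℕ) : DecidableEq (Idx d k) := by unfold Idx; infer_instance

instance (d k : ℕ) : Fintype (Idx d k) :=
  Fintype.ofInjective
    (fun a : Idx d k => fun i : Fin d =>
      (⟨a.1 i, Nat.lt_succ_of_le (le_trans
        (Finset.single_le_sum (f := a.1) (fun j _ => Nat.zero_le _) (Finset.mem_univ i))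
        a.2)⟩ : Fin (k + 1)))
    (fun a b h => Subtype.ext (funext fun i => congrArg (fun f => ((f i : Fin (k+1)) : ℕ)) h))

/-- The space `C^m(K)`, realized as tuples `(g_α)_{|α| ≤ m}` of continuous
functions on `K` (the restriction to `K` of the derivatives `D^α f`), with the
topology of uniform convergence of all derivatives of order at most `m`
(the product of the compact-open topologies, i.e. the `C^m(K)`-norm topology). -/
abbrev CmSpace (d m : ℕ) (K : Set (Euc d)) : Type := Idx d m → C(↥K, ℝ)

/-- A tuple `g ∈ CmSpace` genuinely comes from an `m`-times continuously
differentiable function on `K`: there is `f` with `f ∈ C^m(K)` such that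
`g α = (D^α f)|_K` for every `|α| ≤ m`. -/
def IsCmTuple {d : ℕ} (m : ℕ) (K : Set (Euc d)) (g : CmSpace d m K) : Prop :=
  ∃ f : Euc d → ℝ, ContDiffOn ℝ (m : ℕ∞) f K ∧
    ∀ (α : Idx d m) (x : ↥K), g α x = mderivW α.1 K f (x : Euc d)

/-- The uniform `C^m`-regularity condition of Adams ('Sobolev Spaces', 4.10) for a
(bounded) open set `Ω ⊆ ℝ^d`: there are a locally finite (here: with uniformly
bounded overlaps) sequence of open sets `U j` covering a boundary strip of `Ω`,
and `m`-smooth maps `Φ j : U j → B` with inverses `Ψ j`, mapping `U j ∩ Ω` onto a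
half ball, whose derivatives up to order `m` are uniformly bounded. -/
def UniformCmRegular {d : ℕ} (m : ℕ) (Ω : Set (Euc d)) : Prop :=
  ∃ (U : ℕ → Set (Euc d)) (Φ Ψ : ℕ → Euc d → Euc d) (M δ : ℝ) (R : ℕ) (i₀ : Fin d),
    0 < M ∧ 0 < δ ∧
    (∀ j, IsOpen (U j)) ∧
    -- the sets Ψ j (half ball) cover the δ-strip of Ω along its boundary
    ({x ∈ Ω | ∃ y ∈ frontier Ω, dist x y < δ} ⊆
      ⋃ j, Ψ j '' Metric.ball (0 : Euc d) (1/2)) ∧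
    -- uniformly locally finite
    (∀ x : Euc d, {j | x ∈ U j}.ncard ≤ R) ∧
    -- Φ j is a bijection from U j onto the unit ball, with inverse Ψ j,
    -- carrying U j ∩ Ω onto the upper half ball
    (∀ j, (∀ x ∈ U j, Ψ j (Φ j x) = x) ∧
      (∀ y ∈ Metric.ball (0 : Euc d) 1, Φ j (Ψ j y) = y) ∧
      Φ j '' U j = Metric.ball (0 : Euc d) 1 ∧
      Φ j '' (U j ∩ Ω) = {y ∈ Metric.ball (0 : Euc d) 1 | 0 < y i₀}) ∧
    -- m-smoothness with uniformly bounded derivatives up to order m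
    (∀ j, ContDiffOn ℝ (m : ℕ∞) (Φ j) (U j) ∧
      ContDiffOn ℝ (m : ℕ∞) (Ψ j) (Metric.ball (0 : Euc d) 1)) ∧
    (∀ j, ∀ n ≤ m,
      (∀ x ∈ U j, ‖iteratedFDerivWithin ℝ n (Φ j) (U j) x‖ ≤ M) ∧
      (∀ y ∈ Metric.ball (0 : Euc d) 1,
        ‖iteratedFDerivWithin ℝ n (Ψ j) (Metric.ball (0 : Euc d) 1) y‖ ≤ M))

/-!
If `|α| < m`, the partial derivatives of `D^α f` are, by Schwarz's theorem, the derivatives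
`D^(α + eᵢ) f` of order `≤ m`, so the gradient of `D^α f` on `Ω` is bounded by the `C^m` bound.
Two nearby points of `Ω` are joined either by their segment, or, if the segment meets `∂Ω` (so
that they lie in the boundary strip), through a chart of the uniform `C^m`-regularity condition:
it maps `Ω` onto a convex half ball and has bounded derivatives. Hence `D^α f` is Lipschitz at
small scales with a constant independent of `f`, and by density so is its continuous extension
to `K = closure Ω`. Top-order derivatives are equicontinuous by assumption, and compactness
follows from Arzelà–Ascoli in each coordinate.
-/

open Metric Topology Filter

section PartialDerivatives

variable {d : ℕ} {Ω K : Set (Euc d)} (hΩ : IsOpen Ω) (hΩK : Ω ⊆ K)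
include hΩ hΩK

theorem pderivW_eq_fderiv (i : Fin d) (u : Euc d → ℝ) {x : Euc d} (hx : x ∈ Ω) :
    pderivW i K u x = fderiv ℝ u x (EuclideanSpace.single i 1) := by
  rw [pderivW, fderivWithin_of_mem_nhds (mem_of_superset (hΩ.mem_nhds hx) hΩK)]

theorem pderivW_eventuallyEq_fderiv (i : Fin d) (u : Euc d → ℝ) {x : Euc d} (hx : x ∈ Ω) :
    pderivW i K u =ᶠ[𝓝 x] fun z => fderiv ℝ u z (EuclideanSpace.single i 1) :=
  eventually_of_mem (hΩ.mem_nhds hx) fun _ hz => pderivW_eq_fderiv hΩ hΩK i u hz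

theorem pderivW_congr {u v : Euc d → ℝ} (huv : EqOn u v Ω) (i : Fin d) :
    EqOn (pderivW i K u) (pderivW i K v) Ω := fun x hx => by
  have huv' : u =ᶠ[𝓝 x] v := eventually_of_mem (hΩ.mem_nhds hx) huv
  rw [pderivW_eq_fderiv hΩ hΩK i u hx, pderivW_eq_fderiv hΩ hΩK i v hx, huv'.fderiv_eq]

theorem contDiffOn_pderivW {u : Euc d → ℝ} {n : ℕ} (hu : ContDiffOn ℝ (n + 1 : ℕ) u Ω)
    (i : Fin d) : ContDiffOn ℝ n (pderivW i K u) Ω :=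
  ((hu.fderiv_of_isOpen hΩ (by norm_cast)).clm_apply contDiffOn_const).congr
    fun _ hx => pderivW_eq_fderiv hΩ hΩK i u hx

theorem pderivW_comm {u : Euc d → ℝ} (hu : ContDiffOn ℝ 2 u Ω) (i j : Fin d) :
    EqOn (pderivW i K (pderivW j K u)) (pderivW j K (pderivW i K u)) Ω := by
  intro x hx
  have hu₂ : ContDiffAt ℝ 2 u x := (hu x hx).contDiffAt (hΩ.mem_nhds hx)
  have hdu : DifferentiableAt ℝ (fderiv ℝ u) x :=
    (hu₂.fderiv_right (m := 1) le_rfl).differentiableAt one_ne_zero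
  have second : ∀ k l : Fin d, pderivW k K (pderivW l K u) x =
      fderiv ℝ (fderiv ℝ u) x (EuclideanSpace.single k 1) (EuclideanSpace.single l 1) := by
    intro k l
    rw [pderivW_eq_fderiv hΩ hΩK k _ hx, (pderivW_eventuallyEq_fderiv hΩ hΩK l u hx).fderiv_eq,
      fderiv_clm_apply hdu (differentiableAt_const _)]
    simp
  rw [second, second, hu₂.isSymmSndFDerivAt (by simp)]

theorem pderivW_iterate_congr {u v : Euc d → ℝ} (huv : EqOn u v Ω) (j : Fin d) (n : ℕ) :
    EqOn ((pderivW j K)^[n] u) ((pderivW j K)^[n] v) Ω := by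
  induction n with
  | zero => exact huv
  | succ n ih =>
    simp only [Function.iterate_succ_apply']
    exact pderivW_congr hΩ hΩK ih j

theorem contDiffOn_pderivW_iterate {u : Euc d → ℝ} {k n : ℕ}
    (hu : ContDiffOn ℝ (k + n : ℕ) u Ω) (j : Fin d) :
    ContDiffOn ℝ k ((pderivW j K)^[n] u) Ω := by
  induction n generalizing u with
  | zero => simpa using hu
  | succ n ih =>
    rw [Function.iterate_succ_apply]
    exact ih (contDiffOn_pderivW hΩ hΩK (by rwa [← add_assoc] at hu) j)

theorem pderivW_iterate_comm {u : Euc d → ℝ} (i j : Fin d) (n : ℕ)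
    (hu : ContDiffOn ℝ (n + 1 : ℕ) u Ω) :
    EqOn (pderivW i K ((pderivW j K)^[n] u)) ((pderivW j K)^[n] (pderivW i K u)) Ω := by
  induction n generalizing u with
  | zero => exact eqOn_refl _ _
  | succ n ih =>
    rw [Function.iterate_succ_apply, Function.iterate_succ_apply]
    refine (ih (contDiffOn_pderivW hΩ hΩK hu j)).trans (pderivW_iterate_congr hΩ hΩK ?_ j n)
    exact pderivW_comm hΩ hΩK (hu.of_le (by norm_cast; omega)) i j

end PartialDerivatives

def mderivWList {d : ℕ} (α : MIdx d) (K : Set (Euc d)) (l : List (Fin d)) (u : Euc d → ℝ) :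
    Euc d → ℝ :=
  l.foldr (fun i g => (pderivW i K)^[α i] g) u

theorem mderivWList_cons {d : ℕ} (α : MIdx d) (K : Set (Euc d)) (j : Fin d) (l : List (Fin d))
    (u : Euc d → ℝ) :
    mderivWList α K (j :: l) u = (pderivW j K)^[α j] (mderivWList α K l u) := rfl

theorem mderivWList_congr_index {d : ℕ} {α β : MIdx d} (K : Set (Euc d)) {l : List (Fin d)}
    (hαβ : ∀ j ∈ l, α j = β j) (u : Euc d → ℝ) :
    mderivWList α K l u = mderivWList β K l u := by
  induction l with
  | nil => rfl
  | cons j l ih =>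
    rw [mderivWList_cons, mderivWList_cons, hαβ j List.mem_cons_self,
      ih fun k hk => hαβ k (List.mem_cons_of_mem j hk)]

theorem mOrder_add_single {d : ℕ} (α : MIdx d) (i : Fin d) :
    mOrder (α + Pi.single i 1) = mOrder α + 1 := by
  simp [mOrder, Finset.sum_add_distrib]

section MultiIndexDerivatives

variable {d : ℕ} {Ω K : Set (Euc d)} (hΩ : IsOpen Ω) (hΩK : Ω ⊆ K)
include hΩ hΩK

theorem contDiffOn_mderivWList (α : MIdx d) (l : List (Fin d)) {k : ℕ} {u : Euc d → ℝ}
    (hu : ContDiffOn ℝ (k + (l.map α).sum : ℕ) u Ω) :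
    ContDiffOn ℝ k (mderivWList α K l u) Ω := by
  induction l generalizing k with
  | nil => simpa [mderivWList] using hu
  | cons j l ih =>
    refine contDiffOn_pderivW_iterate hΩ hΩK (ih ?_) j
    rwa [List.map_cons, List.sum_cons, ← add_assoc] at hu

/-- Schwarz's theorem lets `∂ᵢ` be moved past the derivatives in the other directions. -/
theorem pderivW_mderivWList (α : MIdx d) {i : Fin d} {l : List (Fin d)} (hl : l.Nodup)
    (hi : i ∈ l) {u : Euc d → ℝ} (hu : ContDiffOn ℝ ((l.map α).sum + 1 : ℕ) u Ω) :
    EqOn (pderivW i K (mderivWList α K l u)) (mderivWList (α + Pi.single i 1) K l u) Ω := by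
  induction l generalizing u with
  | nil => simp at hi
  | cons j l ih =>
    rw [List.nodup_cons] at hl
    rw [List.map_cons, List.sum_cons] at hu
    rw [mderivWList_cons, mderivWList_cons]
    by_cases hji : j = i
    · subst hji
      have hβ : mderivWList (α + Pi.single j 1) K l u = mderivWList α K l u :=
        mderivWList_congr_index K (fun k hk => by simp [ne_of_mem_of_not_mem hk hl.1]) u
      rw [hβ, show (α + Pi.single j 1 : MIdx d) j = α j + 1 by simp,
        Function.iterate_succ_apply']
      exact eqOn_refl _ _
    · have hil : i ∈ l := (List.mem_cons.mp hi).resolve_left (Ne.symm hji)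
      have hcomm := pderivW_iterate_comm hΩ hΩK i j (α j)
        (contDiffOn_mderivWList hΩ hΩK α l (k := α j + 1) (by rwa [add_right_comm]))
      refine hcomm.trans ?_
      rw [show (α + Pi.single i 1 : MIdx d) j = α j by simp [hji]]
      exact pderivW_iterate_congr hΩ hΩK
        (ih hl.2 hil (hu.of_le (by norm_cast; omega))) j (α j)

theorem pderivW_mderivW (α : MIdx d) (i : Fin d) {u : Euc d → ℝ}
    (hu : ContDiffOn ℝ (mOrder α + 1 : ℕ) u Ω) :
    EqOn (pderivW i K (mderivW α K u)) (mderivW (α + Pi.single i 1) K u) Ω :=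
  pderivW_mderivWList hΩ hΩK α (List.nodup_finRange d) (List.mem_finRange i)
    (by rwa [mOrder, Fin.sum_univ_def] at hu)

end MultiIndexDerivatives

section Charts

variable {E F : Type*} [NormedAddCommGroup E] [NormedSpace ℝ E]
  [NormedAddCommGroup F] [NormedSpace ℝ F]

theorem eventually_mem_and_norm_sub_le {U : Set E} {Φ : E → F} {M : ℝ} (hU : IsOpen U)
    (hΦ : ∀ z ∈ U, DifferentiableAt ℝ Φ z) (hΦM : ∀ z ∈ U, ‖fderiv ℝ Φ z‖ ≤ M) {z : E}
    (hz : z ∈ U) : ∀ᶠ w in 𝓝 z, w ∈ U ∧ ‖Φ w - Φ z‖ ≤ M * ‖w - z‖ := by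
  obtain ⟨ε, hε, hball⟩ := Metric.isOpen_iff.mp hU z hz
  filter_upwards [ball_mem_nhds z hε] with w hw
  exact ⟨hball hw, (convex_ball z ε).norm_image_sub_le_of_norm_fderiv_le
    (fun y hy => hΦ y (hball hy)) (fun y hy => hΦM y (hball hy)) (mem_ball_self hε) hw⟩

/-- Continuous induction along the segment `[x, x']`: while it stays in `U`, its image under `Φ`
stays in `closedBall 0 (‖Φ x‖ + M ‖x' - x‖) ⊆ ball 0 1`, whose image under `Ψ` is a compact
subset of `U`. -/
theorem mem_and_norm_sub_le_of_chart [ProperSpace F] {U : Set E} {Φ : E → F} {Ψ : F → E} {M : ℝ}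
    (hU : IsOpen U) (hΦ : ∀ z ∈ U, DifferentiableAt ℝ Φ z) (hΦM : ∀ z ∈ U, ‖fderiv ℝ Φ z‖ ≤ M)
    (hΨ : ContinuousOn Ψ (ball 0 1)) (hΨU : MapsTo Ψ (ball 0 1) U)
    (hΨΦ : ∀ z ∈ U, Ψ (Φ z) = z) {x x' : E} (hx : x ∈ U) (hr : ‖Φ x‖ + M * ‖x' - x‖ < 1) :
    x' ∈ U ∧ ‖Φ x' - Φ x‖ ≤ M * ‖x' - x‖ := by
  set r := ‖Φ x‖ + M * ‖x' - x‖
  have hM : 0 ≤ M := (norm_nonneg _).trans (hΦM x hx)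
  let γ : ℝ → E := fun t => x + t • (x' - x)
  have hγ : Continuous γ := by fun_prop
  have hγsub : ∀ s t, γ t - γ s = (t - s) • (x' - x) := fun s t => by
    simp only [γ, sub_smul]; abel
  set C := Ψ '' closedBall 0 r
  have hCU : C ⊆ U := image_subset_iff.2 (hΨU.mono_left (closedBall_subset_ball hr))
  have hC : IsClosed C := ((isCompact_closedBall 0 r).image_of_continuousOn
    (hΨ.mono (closedBall_subset_ball hr))).isClosed
  let s := {t ∈ Icc (0 : ℝ) 1 | γ t ∈ C ∧ ‖Φ (γ t) - Φ x‖ ≤ M * t * ‖x' - x‖}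
  have hs : IsClosed (s ∩ Icc 0 1) := by
    have hΦγ : ContinuousOn (fun t => (‖Φ (γ t) - Φ x‖, M * t * ‖x' - x‖)) (Icc 0 1 ∩ γ ⁻¹' C) :=
      (((continuousOn_of_forall_continuousAt fun z hz => (hΦ z hz).continuousAt).comp
        hγ.continuousOn fun t ht => hCU ht.2).sub continuousOn_const).norm.prodMk (by fun_prop)
    convert hΦγ.preimage_isClosed_of_isClosed (isClosed_Icc.inter (hC.preimage hγ))
      (isClosed_le continuous_fst continuous_snd) using 1
    ext t
    simp only [s, mem_inter_iff, mem_ofPred_eq, mem_preimage]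
    tauto
  have hstep : ∀ t ∈ s ∩ Ico 0 1, s ∈ 𝓝[>] t := by
    rintro t ⟨⟨ht, hγt, hbound⟩, -, ht1⟩
    filter_upwards [nhdsWithin_le_nhds (hγ.continuousAt.eventually
        (eventually_mem_and_norm_sub_le hU hΦ hΦM (hCU hγt))),
      nhdsWithin_le_nhds (Iio_mem_nhds ht1), self_mem_nhdsWithin] with t' ⟨ht'U, hΦt'⟩ ht'1 htt'
    rw [hγsub, norm_smul, Real.norm_of_nonneg (sub_nonneg.2 htt'.le)] at hΦt'
    have hbound' : ‖Φ (γ t') - Φ x‖ ≤ M * t' * ‖x' - x‖ := by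
      calc ‖Φ (γ t') - Φ x‖ ≤ ‖Φ (γ t') - Φ (γ t)‖ + ‖Φ (γ t) - Φ x‖ :=
            norm_sub_le_norm_sub_add_norm_sub _ _ _
        _ ≤ M * ((t' - t) * ‖x' - x‖) + M * t * ‖x' - x‖ := add_le_add hΦt' hbound
        _ = M * t' * ‖x' - x‖ := by ring
    have hΦγt' : Φ (γ t') ∈ closedBall 0 r := by
      rw [mem_closedBall_zero_iff]
      calc ‖Φ (γ t')‖ ≤ ‖Φ x‖ + ‖Φ (γ t') - Φ x‖ := norm_le_norm_add_norm_sub' _ _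
        _ ≤ ‖Φ x‖ + M * 1 * ‖x' - x‖ := by gcongr; exact hbound'.trans (by gcongr; exact ht'1.le)
        _ = r := by ring
    refine ⟨⟨ht.1.trans htt'.le, ht'1.le⟩, ?_, hbound'⟩
    rw [← hΨΦ _ ht'U]
    exact mem_image_of_mem Ψ hΦγt'
  have hxC : x ∈ C := hΨΦ x hx ▸ mem_image_of_mem Ψ
    (mem_closedBall_zero_iff.2 (le_add_of_nonneg_right (by positivity)))
  have h0 : (0 : ℝ) ∈ s := ⟨left_mem_Icc.2 zero_le_one, by simpa [γ] using hxC, by simp [γ]⟩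
  obtain ⟨-, h1C, h1⟩ :=
    hs.Icc_subset_of_forall_mem_nhdsWithin h0 hstep (right_mem_Icc.2 zero_le_one)
  simp only [γ, one_smul, add_sub_cancel, mul_one] at h1C h1
  exact ⟨hCU h1C, h1⟩

theorem norm_sub_le_of_chart [ProperSpace F] {G : Type*} [NormedAddCommGroup G] [NormedSpace ℝ G]
    {U Ω : Set E} {Φ : E → F} {Ψ : F → E} {M L : ℝ} {h : E → G} (hU : IsOpen U)
    (hΨΦ : ∀ z ∈ U, Ψ (Φ z) = z) (hΦU : Φ '' U = ball 0 1) (hconv : Convex ℝ (Φ '' (U ∩ Ω)))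
    (hΦ : ∀ z ∈ U, DifferentiableAt ℝ Φ z) (hΦM : ∀ z ∈ U, ‖fderiv ℝ Φ z‖ ≤ M)
    (hΨ : ∀ y ∈ ball 0 1, DifferentiableAt ℝ Ψ y) (hΨM : ∀ y ∈ ball 0 1, ‖fderiv ℝ Ψ y‖ ≤ M)
    (hh : ∀ z ∈ Ω, DifferentiableAt ℝ h z) (hhL : ∀ z ∈ Ω, ‖fderiv ℝ h z‖ ≤ L)
    {x x' : E} (hx : x ∈ U ∩ Ω) (hx' : x' ∈ Ω) (hr : ‖Φ x‖ + M * ‖x' - x‖ < 1) :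
    ‖h x' - h x‖ ≤ L * M * (M * ‖x' - x‖) := by
  have hΨU : MapsTo Ψ (ball 0 1) U := by
    intro y hy
    obtain ⟨z, hz, rfl⟩ := hΦU ▸ hy
    rwa [hΨΦ z hz]
  obtain ⟨hx'U, hΦxx'⟩ := mem_and_norm_sub_le_of_chart hU hΦ hΦM
    (fun y hy => (hΨ y hy).continuousAt.continuousWithinAt) hΨU hΨΦ hx.1 hr
  have hSball : Φ '' (U ∩ Ω) ⊆ ball 0 1 := hΦU ▸ image_mono inter_subset_left
  have hΨΩ : MapsTo Ψ (Φ '' (U ∩ Ω)) Ω := by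
    rintro _ ⟨z, hz, rfl⟩
    rw [hΨΦ z hz.1]
    exact hz.2
  have hL : 0 ≤ L := (norm_nonneg _).trans (hhL x hx.2)
  have hM : 0 ≤ M := (norm_nonneg _).trans (hΦM x hx.1)
  have hcomp := hconv.norm_image_sub_le_of_norm_fderiv_le (f := h ∘ Ψ) (C := L * M)
    (fun y hy => (hh _ (hΨΩ hy)).comp y (hΨ y (hSball hy)))
    (fun y hy => by
      rw [fderiv_comp y (hh _ (hΨΩ hy)) (hΨ y (hSball hy))]
      exact (ContinuousLinearMap.opNorm_comp_le _ _).trans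
        (mul_le_mul (hhL _ (hΨΩ hy)) (hΨM y (hSball hy)) (norm_nonneg _) hL))
    (mem_image_of_mem Φ hx) (mem_image_of_mem Φ ⟨hx'U, hx'⟩)
  rw [Function.comp_apply, Function.comp_apply, hΨΦ x hx.1, hΨΦ x' hx'U] at hcomp
  exact hcomp.trans (by gcongr)

end Charts

theorem IsPreconnected.inter_frontier_nonempty_of_isOpen {X : Type*} [TopologicalSpace X]
    {s u : Set X} (hs : IsPreconnected s) (hu : IsOpen u) (hsu : (s ∩ u).Nonempty)
    (hsu' : ¬s ⊆ u) : (s ∩ frontier u).Nonempty := by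
  by_contra h
  refine hsu' (hs.subset_left_of_subset_union hu isClosed_closure.isOpen_compl
    (disjoint_compl_right.mono_right (compl_subset_compl.2 subset_closure)) (fun z hz => ?_) hsu)
  by_contra hz'
  simp only [mem_union, mem_compl_iff, not_or, not_not] at hz'
  exact h ⟨z, hz, hz'.2, by rw [hu.interior_eq]; exact hz'.1⟩

theorem norm_fderiv_le_of_norm_iteratedFDerivWithin_one_le {E F : Type*}
    [NormedAddCommGroup E] [NormedSpace ℝ E] [NormedAddCommGroup F] [NormedSpace ℝ F]
    {V : Set E} (hV : IsOpen V) {f : E → F} {z : E} (hz : z ∈ V) {M : ℝ}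
    (hf : ‖iteratedFDerivWithin ℝ 1 f V z‖ ≤ M) : ‖fderiv ℝ f z‖ ≤ M := by
  rwa [norm_iteratedFDerivWithin_one f (hV.uniqueDiffWithinAt hz), fderivWithin_of_isOpen hV hz]
    at hf

theorem exists_mem_frontier_dist_le_of_not_segment_subset {E : Type*} [NormedAddCommGroup E]
    [NormedSpace ℝ E] {Ω : Set E} (hΩ : IsOpen Ω) {x x' : E} (hx : x ∈ Ω)
    (hseg : ¬segment ℝ x x' ⊆ Ω) : ∃ p ∈ frontier Ω, dist x p ≤ dist x x' := by
  obtain ⟨p, hpseg, hp⟩ := (convex_segment x x').isPreconnected.inter_frontier_nonempty_of_isOpen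
    hΩ ⟨x, left_mem_segment ℝ x x', hx⟩ hseg
  refine ⟨p, hp, ?_⟩
  linarith [dist_add_dist_of_mem_segment hpseg, dist_nonneg (x := p) (y := x')]

theorem UniformCmRegular.exists_charts {d m : ℕ} {Ω : Set (Euc d)} (hreg : UniformCmRegular m Ω)
    (hm : m ≠ 0) :
    ∃ M δ : ℝ, 0 < M ∧ 0 < δ ∧ ∀ x ∈ Ω, (∃ p ∈ frontier Ω, dist x p < δ) →
      ∃ (U : Set (Euc d)) (Φ Ψ : Euc d → Euc d), IsOpen U ∧ x ∈ U ∧ ‖Φ x‖ < 1 / 2 ∧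
        (∀ z ∈ U, Ψ (Φ z) = z) ∧ Φ '' U = ball 0 1 ∧ Convex ℝ (Φ '' (U ∩ Ω)) ∧
        (∀ z ∈ U, DifferentiableAt ℝ Φ z) ∧ (∀ z ∈ U, ‖fderiv ℝ Φ z‖ ≤ M) ∧
        (∀ w ∈ ball 0 1, DifferentiableAt ℝ Ψ w) ∧ (∀ w ∈ ball 0 1, ‖fderiv ℝ Ψ w‖ ≤ M) := by
  obtain ⟨U, Φ, Ψ, M, δ, -, i₀, hM, hδ, hU, hcover, -, hinv, hsm, hder⟩ := hreg
  refine ⟨M, δ, hM, hδ, fun x hx hstrip => ?_⟩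
  obtain ⟨j, y, hy, rfl⟩ : ∃ j, ∃ y ∈ ball (0 : Euc d) (1 / 2), Ψ j y = x := by
    simpa using hcover ⟨hx, hstrip⟩
  obtain ⟨hΨΦ, hΦΨ, hΦU, hΦUΩ⟩ := hinv j
  have hy1 : y ∈ ball (0 : Euc d) 1 := ball_subset_ball (by norm_num) hy
  have hhalf : Convex ℝ {y ∈ ball (0 : Euc d) 1 | 0 < y i₀} :=
    (convex_ball 0 1).inter (convex_halfSpace_gt (f := fun w : Euc d => w i₀)
      ⟨fun _ _ => rfl, fun _ _ => rfl⟩ 0)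
  have hm' : (m : WithTop ℕ∞) ≠ 0 := by simpa using hm
  refine ⟨U j, Φ j, Ψ j, hU j, ?_, by rwa [hΦΨ y hy1, ← mem_ball_zero_iff], hΨΦ, hΦU,
    hΦUΩ ▸ hhalf, fun z hz => ((hsm j).1.contDiffAt ((hU j).mem_nhds hz)).differentiableAt hm',
    fun z hz => norm_fderiv_le_of_norm_iteratedFDerivWithin_one_le (hU j) hz
      ((hder j 1 (by omega)).1 z hz),
    fun w hw => ((hsm j).2.contDiffAt (isOpen_ball.mem_nhds hw)).differentiableAt hm',
    fun w hw => norm_fderiv_le_of_norm_iteratedFDerivWithin_one_le isOpen_ball hw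
      ((hder j 1 (by omega)).2 w hw)⟩
  obtain ⟨z, hz, rfl⟩ := hΦU ▸ hy1
  rwa [hΨΦ z hz]

theorem UniformCmRegular.exists_norm_sub_le {G : Type*} [NormedAddCommGroup G] [NormedSpace ℝ G]
    {d m : ℕ} {Ω : Set (Euc d)} (hreg : UniformCmRegular m Ω) (hΩ : IsOpen Ω) (hm : m ≠ 0) :
    ∃ ρ > 0, ∃ C, ∀ {h : Euc d → G} {L : ℝ}, (∀ z ∈ Ω, DifferentiableAt ℝ h z) →
      (∀ z ∈ Ω, ‖fderiv ℝ h z‖ ≤ L) →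
      ∀ x ∈ Ω, ∀ x' ∈ Ω, ‖x' - x‖ < ρ → ‖h x' - h x‖ ≤ C * L * ‖x' - x‖ := by
  obtain ⟨M, δ, hM, hδ, hcharts⟩ := hreg.exists_charts hm
  refine ⟨min δ (1 / (2 * (M + 1))), by positivity, M * M + 1,
    fun {h L} hh hhL x hx x' hx' hxx' => ?_⟩
  have hL : 0 ≤ L := (norm_nonneg _).trans (hhL x hx)
  by_cases hseg : segment ℝ x x' ⊆ Ω
  · calc ‖h x' - h x‖ ≤ L * ‖x' - x‖ := (convex_segment x x').norm_image_sub_le_of_norm_fderiv_le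
          (fun z hz => hh z (hseg hz)) (fun z hz => hhL z (hseg hz))
          (left_mem_segment ℝ x x') (right_mem_segment ℝ x x')
      _ ≤ (M * M + 1) * L * ‖x' - x‖ := by gcongr; nlinarith
  obtain ⟨p, hp, hpx⟩ := exists_mem_frontier_dist_le_of_not_segment_subset hΩ hx hseg
  obtain ⟨U, Φ, Ψ, hU, hxU, hΦx, hΨΦ, hΦU, hconv, hΦ, hΦM, hΨ, hΨM⟩ := hcharts x hx ⟨p, hp,
    hpx.trans_lt (by rw [dist_comm, dist_eq_norm]; exact hxx'.trans_le (min_le_left _ _))⟩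
  have hMx : M * ‖x' - x‖ < 1 / 2 := by
    calc M * ‖x' - x‖ ≤ M * (1 / (2 * (M + 1))) := by
          gcongr; exact hxx'.le.trans (min_le_right _ _)
      _ < 1 / 2 := by rw [mul_one_div, div_lt_div_iff₀ (by positivity) two_pos]; linarith
  calc ‖h x' - h x‖ ≤ L * M * (M * ‖x' - x‖) := norm_sub_le_of_chart hU hΨΦ hΦU hconv hΦ hΦM hΨ
        hΨM hh hhL ⟨hxU, hx⟩ hx' (by linarith)
    _ ≤ (M * M + 1) * L * ‖x' - x‖ := by nlinarith [mul_nonneg hL (norm_nonneg (x' - x))]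

theorem differentiableAt_mderivW {d : ℕ} {Ω K : Set (Euc d)} (hΩ : IsOpen Ω) (hΩK : Ω ⊆ K)
    (α : MIdx d) {u : Euc d → ℝ} (hu : ContDiffOn ℝ (mOrder α + 1 : ℕ) u Ω) {x : Euc d}
    (hx : x ∈ Ω) : DifferentiableAt ℝ (mderivW α K u) x := by
  have h1 : ContDiffOn ℝ (1 : ℕ) (mderivW α K u) Ω :=
    contDiffOn_mderivWList hΩ hΩK α _ (by rwa [add_comm 1, ← Fin.sum_univ_def])
  exact ((h1 x hx).contDiffAt (hΩ.mem_nhds hx)).differentiableAt (by norm_num)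

theorem UniformCmRegular.exists_abs_mderivW_sub_le {d m : ℕ} {Ω K : Set (Euc d)}
    (hreg : UniformCmRegular m Ω) (hΩ : IsOpen Ω) (hΩK : Ω ⊆ K) :
    ∃ ρ > 0, ∃ C, ∀ {f : Euc d → ℝ} {Mb : ℝ} {α : MIdx d}, ContDiffOn ℝ m f Ω →
      (∀ β : MIdx d, mOrder β ≤ m → ∀ x ∈ Ω, |mderivW β K f x| ≤ Mb) → mOrder α < m →
      ∀ x ∈ Ω, ∀ x' ∈ Ω, ‖x' - x‖ < ρ →
        |mderivW α K f x' - mderivW α K f x| ≤ C * Mb * ‖x' - x‖ := by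
  rcases eq_or_ne m 0 with rfl | hm
  · exact ⟨1, one_pos, 0, fun _ _ hα => absurd hα (Nat.not_lt_zero _)⟩
  obtain ⟨ρ, hρ, C, hC⟩ := hreg.exists_norm_sub_le (G := ℝ) hΩ hm
  obtain ⟨C₀, -, hbasis⟩ := (EuclideanSpace.basisFun (Fin d) ℝ).toBasis.exists_opNorm_le (F := ℝ)
  refine ⟨ρ, hρ, C * C₀, fun {f Mb α} hf hbd hα x hx x' hx' hxx' => ?_⟩
  have hfα : ContDiffOn ℝ (mOrder α + 1 : ℕ) f Ω := hf.of_le (by exact_mod_cast hα)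
  have hMb : 0 ≤ Mb := (abs_nonneg _).trans (hbd α hα.le x hx)
  have hgrad : ∀ z ∈ Ω, ‖fderiv ℝ (mderivW α K f) z‖ ≤ C₀ * Mb := fun z hz => by
    refine hbasis hMb fun i => ?_
    simp only [OrthonormalBasis.coe_toBasis, EuclideanSpace.basisFun_apply, Real.norm_eq_abs]
    rw [← pderivW_eq_fderiv hΩ hΩK i _ hz, pderivW_mderivW hΩ hΩK α i hfα hz]
    exact hbd _ (by rw [mOrder_add_single]; omega) z hz
  have := hC (fun z hz => differentiableAt_mderivW hΩ hΩK α hfα hz) hgrad x hx x' hx' hxx'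
  rwa [Real.norm_eq_abs, ← mul_assoc] at this

theorem Dense.dist_le_mul_dist_of_dist_lt {X Y : Type*} [PseudoMetricSpace X]
    [PseudoMetricSpace Y] {s : Set X} (hs : Dense s) {g : X → Y} (hg : Continuous g) {ρ C : ℝ}
    (h : ∀ x ∈ s, ∀ y ∈ s, dist x y < ρ → dist (g x) (g y) ≤ C * dist x y) (x y : X)
    (hxy : dist x y < ρ) : dist (g x) (g y) ≤ C * dist x y := by
  have hclosed :
      IsClosed {p : X × X | ρ ≤ dist p.1 p.2 ∨ dist (g p.1) (g p.2) ≤ C * dist p.1 p.2} :=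
    (isClosed_le continuous_const (continuous_fst.dist continuous_snd)).union
      (isClosed_le ((hg.comp continuous_fst).dist (hg.comp continuous_snd))
        (continuous_const.mul (continuous_fst.dist continuous_snd)))
  refine (isClosed_property2 (p := fun x y => ρ ≤ dist x y ∨ dist (g x) (g y) ≤ C * dist x y)
    hs.denseRange_val hclosed (fun a b => ?_) x y).resolve_left (not_le.2 hxy)
  exact or_iff_not_imp_left.2 fun hab => h a a.2 b b.2 (not_le.1 hab)

theorem ContinuousMap.isCompact_closure_of_equicontinuous {X β : Type*} [TopologicalSpace X]
    [CompactSpace X] [MetricSpace β] {s : Set β} (hs : IsCompact s) {A : Set C(X, β)}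
    (hAs : ∀ f ∈ A, ∀ x, f x ∈ s) (hA : Equicontinuous ((↑) : A → X → β)) :
    IsCompact (closure A) := by
  let e := (ContinuousMap.isometryEquivBoundedOfCompact X β).toHomeomorph
  have hB : IsCompact (closure (e '' A)) := by
    refine BoundedContinuousFunction.arzela_ascoli s hs _
      (by rintro _ x ⟨f, hf, rfl⟩; exact hAs f hf x) fun x₀ U hU => ?_
    filter_upwards [hA x₀ U hU] with x hx
    rintro ⟨_, f, hf, rfl⟩
    exact hx ⟨f, hf⟩
  rwa [← e.isCompact_preimage, e.preimage_closure, e.preimage_image] at hB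

theorem isCompact_closure_of_forall_isCompact_closure_image_eval {ι : Type*} {X : ι → Type*}
    [∀ i, TopologicalSpace (X i)] {F : Set (∀ i, X i)}
    (h : ∀ i, IsCompact (closure ((fun f => f i) '' F))) : IsCompact (closure F) := by
  refine (isCompact_univ_pi h).of_isClosed_subset isClosed_closure ?_
  rw [← closure_pi_set]
  exact closure_mono fun f hf i _ => mem_image_of_mem _ hf

theorem UniformCmRegular.exists_dist_le_of_mOrder_lt {d m : ℕ} {Ω K : Set (Euc d)}
    (hreg : UniformCmRegular m Ω) (hΩ : IsOpen Ω) (hK : K = closure Ω) (Mb : ℝ) :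
    ∃ ρ > 0, ∃ L, ∀ g : CmSpace d m K, IsCmTuple m K g → (∀ α x, |g α x| ≤ Mb) →
      ∀ α : Idx d m, mOrder α.1 < m → ∀ x y : K, dist x y < ρ →
        dist (g α x) (g α y) ≤ L * dist x y := by
  have hΩK : Ω ⊆ K := hK ▸ subset_closure
  obtain ⟨ρ, hρ, C, hC⟩ := hreg.exists_abs_mderivW_sub_le hΩ hΩK
  refine ⟨ρ, hρ, C * Mb, fun g ⟨f, hf, hgf⟩ hg α hα => ?_⟩
  have hdense : Dense {x : K | ↑x ∈ Ω} :=
    Subtype.dense_iff.2 (hK.le.trans (closure_mono fun z hz => ⟨⟨z, hΩK hz⟩, hz, rfl⟩))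
  refine hdense.dist_le_mul_dist_of_dist_lt (g α).continuous fun x hx y hy hxy => ?_
  rw [Real.dist_eq, hgf, hgf, Subtype.dist_eq, dist_eq_norm]
  rw [Subtype.dist_eq, dist_eq_norm] at hxy
  exact hC (hf.mono hΩK) (fun β hβ z hz => hgf ⟨β, hβ⟩ ⟨z, hΩK hz⟩ ▸ hg ⟨β, hβ⟩ ⟨z, hΩK hz⟩) hα
    y hy x hx hxy

theorem isCompact_closure_of_abs_le_of_equicontinuous {ι X : Type*} [MetricSpace X]
    [CompactSpace X] {F : Set (ι → C(X, ℝ))} {Mb : ℝ} (hbdd : ∀ g ∈ F, ∀ i x, |g i x| ≤ Mb)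
    (hequi : ∀ ε : ℝ, 0 < ε → ∃ δ : ℝ, 0 < δ ∧ ∀ g ∈ F, ∀ i (x y : X),
      dist x y < δ → |g i x - g i y| < ε) :
    IsCompact (closure F) := by
  refine isCompact_closure_of_forall_isCompact_closure_image_eval fun i =>
    ContinuousMap.isCompact_closure_of_equicontinuous (isCompact_Icc (a := -Mb) (b := Mb))
      (by rintro _ ⟨g, hg, rfl⟩ x; exact abs_le.1 (hbdd g hg i x)) ?_
  refine (Metric.uniformEquicontinuous_iff.2 fun ε hε => ?_).equicontinuous
  obtain ⟨δ, hδ, hδε⟩ := hequi ε hε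
  exact ⟨δ, hδ, fun x y hxy ⟨_, g, hg, rfl⟩ => hδε g hg i x y hxy⟩

/-- **Top-order equicontinuity suffices in `C^m`** (Corollary 1.10).
Let `K = closure Ω ⊆ ℝ^d` be compact, where `Ω` is a bounded open set satisfying
the uniform `C^m`-regularity condition, and let `F ⊆ C^m(K)`.  If `F` is bounded
in the `C^m(K)` norm and the top-order derivatives (`|α| = m`) are uniformly
equicontinuous, then all derivatives of order up to `m` are uniformly
equicontinuous on `F`; consequently `F` is precompact in `C^m(K)`. -/
theorem top_order_equicontinuity_suffices_Cm
    (d m : ℕ) (Ω : Set (Euc d)) (hΩopen : IsOpen Ω) (hΩbdd : Bornology.IsBounded Ω)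
    (hreg : UniformCmRegular m Ω)
    (K : Set (Euc d)) (hK : K = closure Ω)
    (F : Set (CmSpace d m K)) (hF : ∀ g ∈ F, IsCmTuple m K g)
    (hbdd : ∃ M : ℝ, 0 < M ∧ ∀ g ∈ F, ∀ (α : Idx d m) (x : ↥K), |g α x| ≤ M)
    (hectop : ∀ ε : ℝ, 0 < ε → ∃ δ : ℝ, 0 < δ ∧ ∀ g ∈ F, ∀ α : Idx d m,
      mOrder α.1 = m → ∀ x₁ x₂ : ↥K, dist x₁ x₂ < δ → |g α x₁ - g α x₂| < ε) :
    (∀ ε : ℝ, 0 < ε → ∃ δ' : ℝ, 0 < δ' ∧ ∀ g ∈ F, ∀ (α : Idx d m) (x₁ x₂ : ↥K),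
      dist x₁ x₂ < δ' → |g α x₁ - g α x₂| < ε) ∧
    IsCompact (closure F) := by
  obtain ⟨Mb, -, hbdd⟩ := hbdd
  obtain ⟨ρ, hρ, L, hL⟩ := hreg.exists_dist_le_of_mOrder_lt hΩopen hK Mb
  have hequi : ∀ ε : ℝ, 0 < ε → ∃ δ' : ℝ, 0 < δ' ∧ ∀ g ∈ F, ∀ (α : Idx d m) (x₁ x₂ : ↥K),
      dist x₁ x₂ < δ' → |g α x₁ - g α x₂| < ε := by
    intro ε hε
    obtain ⟨δ, hδ, htop⟩ := hectop ε hε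
    refine ⟨min δ (min ρ (ε / (|L| + 1))), by positivity, fun g hg α x₁ x₂ hx => ?_⟩
    rcases α.2.eq_or_lt with hαm | hαm
    · exact htop g hg α hαm x₁ x₂ (hx.trans_le (min_le_left _ _))
    · have hxρ : dist x₁ x₂ < ρ := hx.trans_le ((min_le_right _ _).trans (min_le_left _ _))
      have hxε : dist x₁ x₂ < ε / (|L| + 1) :=
        hx.trans_le ((min_le_right _ _).trans (min_le_right _ _))
      calc |g α x₁ - g α x₂| ≤ L * dist x₁ x₂ := hL g (hF g hg) (hbdd g hg) α hαm x₁ x₂ hxρ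
        _ ≤ (|L| + 1) * dist x₁ x₂ := by gcongr; linarith [le_abs_self L]
        _ < (|L| + 1) * (ε / (|L| + 1)) := by gcongr
        _ = ε := mul_div_cancel₀ _ (by positivity)
  have : CompactSpace K := isCompact_iff_compactSpace.1 (hK ▸ hΩbdd.isCompact_closure)
  exact ⟨hequi, isCompact_closure_of_abs_le_of_equicontinuous hbdd hequi⟩

end
end

section
/- Attainment criterion for a one-dimensional variational problem (Proposition 1.12, main part). Let E = {u ∈ W^{1,1}(0,1) : u(0) = 0, u(1) = 1} (boundary values in the trace sense, i.e., for the absolutely continuous representative), and for constants k > 0, ℓ ≥ 0, p ≥ 1 and c ∈ L^1(0,1) define J(u) = ∫₀¹ [(k|u̇(t)|^p + ℓ|u(t)|^p)^{1/p} + c(t)] dt. Then the infimum of J over E is attained at some ū ∈ E if and only if ℓ = 0. -/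
open MeasureTheory Set Filter
open scoped ENNReal Topology

noncomputable section

/-- `u ∈ W^{1,1}(0,1)` with weak derivative `u'`, represented by its absolutely
continuous representative: `u'` is integrable on `(0,1)` and
`u(t) = u(0) + ∫₀ᵗ u'` for all `t ∈ [0,1]`. -/
def W11I (u u' : ℝ → ℝ) : Prop :=
  IntegrableOn u' (Set.Ioo 0 1) volume ∧
    ∀ t ∈ Set.Icc (0 : ℝ) 1, u t = u 0 + ∫ s in (0 : ℝ)..t, u' s

/-- Membership in `E = {u ∈ W^{1,1}(0,1) : u(0) = 0, u(1) = 1}` (boundary values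
taken for the absolutely continuous representative). -/
def MemE (u u' : ℝ → ℝ) : Prop :=
  W11I u u' ∧ u 0 = 0 ∧ u 1 = 1

/-- The functional `J(u) = ∫₀¹ [(k|u̇|^p + ℓ|u|^p)^{1/p} + c(t)] dt`, as an
extended real number (`+∞` if the nonnegative part of the integrand is not
integrable): it is the (possibly infinite) integral of the nonnegative term
plus the finite integral `∫₀¹ c`. -/
def Jace (k ℓ p : ℝ) (c : ℝ → ℝ) (u u' : ℝ → ℝ) : EReal :=
  ((∫⁻ t in Set.Ioo (0 : ℝ) 1,
      ENNReal.ofReal ((k * |u' t| ^ p + ℓ * |u t| ^ p) ^ (1 / p)) : ℝ≥0∞) : EReal) +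
    ((∫ t in Set.Ioo (0 : ℝ) 1, c t : ℝ) : EReal)

/-! Every admissible `v` has `∫₀¹ |v̇| ≥ ∫₀¹ v̇ = 1`, and the integrand dominates `k^{1/p} |v̇|`,
so `J ≥ k^{1/p} + ∫₀¹ c` on `E`. The functions `tⁿ⁺¹` come within `ℓ^{1/p}/(n+2)` of this bound,
which is therefore the infimum; for `ℓ = 0` the function `t` attains it. For `ℓ > 0` a minimizer
would satisfy `(k|u̇|^p + ℓ|u|^p)^{1/p} = k^{1/p}|u̇|` a.e., hence `u = 0` a.e., contradicting
`u(1) = 1` by continuity. -/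

def energy (k ℓ p : ℝ) (u u' : ℝ → ℝ) : ℝ≥0∞ :=
  ∫⁻ t in Ioo (0 : ℝ) 1, ENNReal.ofReal ((k * |u' t| ^ p + ℓ * |u t| ^ p) ^ (1 / p))

lemma Jace_le_Jace_iff {k ℓ p : ℝ} {c u u' v v' : ℝ → ℝ} :
    Jace k ℓ p c u u' ≤ Jace k ℓ p c v v' ↔ energy k ℓ p u u' ≤ energy k ℓ p v v' :=
  (EReal.addLECancellable_coe _).add_le_add_iff_right.trans EReal.coe_ennreal_le_coe_ennreal_iff

section Integrand

variable {k ℓ p : ℝ}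

lemma mul_abs_rpow_rpow_one_div (hk : 0 ≤ k) (hp : p ≠ 0) (x : ℝ) :
    (k * |x| ^ p) ^ (1 / p) = k ^ (1 / p) * |x| := by
  rw [Real.mul_rpow hk (by positivity), ← Real.rpow_mul (abs_nonneg x), mul_one_div_cancel hp,
    Real.rpow_one]

lemma rpow_one_div_mul_abs_le (hk : 0 ≤ k) (hℓ : 0 ≤ ℓ) (hp : 0 < p) (x y : ℝ) :
    k ^ (1 / p) * |x| ≤ (k * |x| ^ p + ℓ * |y| ^ p) ^ (1 / p) := by
  rw [← mul_abs_rpow_rpow_one_div hk hp.ne']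
  gcongr
  exact le_add_of_nonneg_right (by positivity)

lemma rpow_one_div_mul_abs_lt (hk : 0 ≤ k) (hℓ : 0 < ℓ) (hp : 0 < p) (x : ℝ) {y : ℝ}
    (hy : y ≠ 0) : k ^ (1 / p) * |x| < (k * |x| ^ p + ℓ * |y| ^ p) ^ (1 / p) := by
  rw [← mul_abs_rpow_rpow_one_div hk hp.ne']
  gcongr
  exact lt_add_of_pos_right _ (by positivity)

lemma rpow_one_div_le_add (hk : 0 ≤ k) (hℓ : 0 ≤ ℓ) (hp : 1 ≤ p) (x y : ℝ) :
    (k * |x| ^ p + ℓ * |y| ^ p) ^ (1 / p) ≤ k ^ (1 / p) * |x| + ℓ ^ (1 / p) * |y| := by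
  have hp0 : p ≠ 0 := by positivity
  calc (k * |x| ^ p + ℓ * |y| ^ p) ^ (1 / p)
      ≤ (k * |x| ^ p) ^ (1 / p) + (ℓ * |y| ^ p) ^ (1 / p) :=
        Real.rpow_add_le_add_rpow (by positivity) (by positivity) (by positivity)
          ((div_le_one (by positivity)).2 hp)
    _ = k ^ (1 / p) * |x| + ℓ ^ (1 / p) * |y| := by
        rw [mul_abs_rpow_rpow_one_div hk hp0, mul_abs_rpow_rpow_one_div hℓ hp0]

end Integrand

namespace MemE

variable {v v' : ℝ → ℝ}

lemma continuousOn (hv : MemE v v') : ContinuousOn v (Icc 0 1) := by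
  obtain ⟨⟨hint, hformula⟩, -⟩ := hv
  have hprim := intervalIntegral.continuousOn_primitive_interval (μ := volume) (f := v')
    (a := 0) (b := 1)
  rw [uIcc_of_le zero_le_one] at hprim
  refine (continuousOn_const.add (hprim ?_)).congr hformula
  rwa [IntegrableOn, ← Measure.restrict_congr_set Ioo_ae_eq_Icc]

lemma not_ae_eq_zero (hv : MemE v v') : ¬ v =ᵐ[volume.restrict (Ioo 0 1)] 0 := by
  intro h
  rw [Measure.restrict_congr_set Ioo_ae_eq_Icc] at h
  have hzero := Measure.eqOn_of_ae_eq h hv.continuousOn continuousOn_const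
    (by rw [interior_Icc, closure_Ioo zero_ne_one])
  have := hzero (right_mem_Icc.2 zero_le_one)
  simp [hv.2.2] at this

lemma integral_deriv (hv : MemE v v') : ∫ t in Ioo 0 1, v' t = 1 := by
  obtain ⟨⟨-, hformula⟩, h0, h1⟩ := hv
  have := hformula 1 (right_mem_Icc.2 zero_le_one)
  rwa [h0, h1, zero_add, intervalIntegral.integral_of_le zero_le_one,
    integral_Ioc_eq_integral_Ioo, eq_comm] at this

lemma ofReal_le_lintegral_mul_abs_deriv (hv : MemE v v') {K : ℝ} (hK : 0 ≤ K) :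
    ENNReal.ofReal K ≤ ∫⁻ t in Ioo 0 1, ENNReal.ofReal (K * |v' t|) := by
  have hint : IntegrableOn (fun t => K * |v' t|) (Ioo 0 1) := hv.1.1.abs.const_mul K
  have hone : 1 ≤ ∫ t in Ioo 0 1, |v' t| := by
    calc (1 : ℝ) = |∫ t in Ioo 0 1, v' t| := by rw [hv.integral_deriv, abs_one]
      _ ≤ ∫ t in Ioo 0 1, |v' t| := abs_integral_le_integral_abs
  rw [← ofReal_integral_eq_lintegral_ofReal hint (ae_of_all _ fun t => by positivity),
    integral_const_mul]
  exact ENNReal.ofReal_le_ofReal (le_mul_of_one_le_right hK hone)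

variable {k ℓ p : ℝ}

lemma ofReal_rpow_le_energy (hv : MemE v v') (hk : 0 ≤ k) (hℓ : 0 ≤ ℓ) (hp : 0 < p) :
    ENNReal.ofReal (k ^ (1 / p)) ≤ energy k ℓ p v v' :=
  (hv.ofReal_le_lintegral_mul_abs_deriv (by positivity)).trans <|
    lintegral_mono fun t => ENNReal.ofReal_le_ofReal (rpow_one_div_mul_abs_le hk hℓ hp _ _)

lemma ofReal_rpow_lt_energy (hv : MemE v v') (hk : 0 ≤ k) (hℓ : 0 < ℓ) (hp : 0 < p) :
    ENNReal.ofReal (k ^ (1 / p)) < energy k ℓ p v v' := by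
  by_contra! hle
  have hpt : ∀ t, ENNReal.ofReal (k ^ (1 / p) * |v' t|) ≤
      ENNReal.ofReal ((k * |v' t| ^ p + ℓ * |v t| ^ p) ^ (1 / p)) := fun t =>
    ENNReal.ofReal_le_ofReal (rpow_one_div_mul_abs_le hk hℓ.le hp _ _)
  have hmeas : AEMeasurable v (volume.restrict (Ioo 0 1)) :=
    (hv.continuousOn.mono Ioo_subset_Icc_self).aemeasurable measurableSet_Ioo
  have hmeas' := hv.1.1.aemeasurable
  have heq := ae_eq_of_ae_le_of_lintegral_le (ae_of_all _ hpt)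
    (ne_top_of_le_ne_top ENNReal.ofReal_ne_top ((lintegral_mono hpt).trans hle)) (by fun_prop)
    (hle.trans (hv.ofReal_le_lintegral_mul_abs_deriv (by positivity)))
  refine hv.not_ae_eq_zero (heq.mono fun t ht => ?_)
  by_contra hne
  exact (rpow_one_div_mul_abs_lt hk hℓ hp (v' t) hne).ne <|
    (ENNReal.ofReal_eq_ofReal_iff (by positivity) (by positivity)).1 ht

end MemE

lemma memE_pow (n : ℕ) : MemE (fun t => t ^ (n + 1)) (fun t => (n + 1) * t ^ n) := by
  refine ⟨⟨(by fun_prop : Continuous fun t : ℝ => (n + 1) * t ^ n).integrableOn_Icc.mono_set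
    Ioo_subset_Icc_self, fun t _ => ?_⟩, by simp, by simp⟩
  rw [intervalIntegral.integral_const_mul, integral_pow]
  field_simp
  simp

lemma energy_pow_le {k ℓ p : ℝ} (hk : 0 ≤ k) (hℓ : 0 ≤ ℓ) (hp : 1 ≤ p) (n : ℕ) :
    energy k ℓ p (fun t => t ^ (n + 1)) (fun t => (n + 1) * t ^ n) ≤
      ENNReal.ofReal (k ^ (1 / p) + ℓ ^ (1 / p) / (n + 2)) := by
  set f : ℝ → ℝ := fun t => k ^ (1 / p) * ((n + 1) * t ^ n) + ℓ ^ (1 / p) * t ^ (n + 1)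
  have hf : ∫ t in Ioo 0 1, f t = k ^ (1 / p) + ℓ ^ (1 / p) / (n + 2) := by
    rw [← integral_Ioc_eq_integral_Ioo, ← intervalIntegral.integral_of_le zero_le_one,
      intervalIntegral.integral_add ((by fun_prop : Continuous _).intervalIntegrable _ _)
        ((by fun_prop : Continuous _).intervalIntegrable _ _),
      intervalIntegral.integral_const_mul, intervalIntegral.integral_const_mul,
      intervalIntegral.integral_const_mul, integral_pow, integral_pow]
    push_cast
    field_simp
    ring
  have hfint : IntegrableOn f (Ioo 0 1) :=
    (by fun_prop : Continuous f).integrableOn_Icc.mono_set Ioo_subset_Icc_self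
  rw [← hf, ofReal_integral_eq_lintegral_ofReal hfint ?_]
  · refine setLIntegral_mono' measurableSet_Ioo fun t ht => ENNReal.ofReal_le_ofReal ?_
    have ht0 := ht.1.le
    have := rpow_one_div_le_add hk hℓ hp ((n + 1) * t ^ n) (t ^ (n + 1))
    rwa [abs_of_nonneg (by positivity), abs_of_nonneg (by positivity)] at this ⊢
  · filter_upwards [ae_restrict_mem measurableSet_Ioo] with t ht
    have := ht.1.le
    positivity

theorem attainment_iff_ell_zero_general
    (k ℓ p : ℝ) (hk : 0 < k) (hℓ : 0 ≤ ℓ) (hp : 1 ≤ p)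
    (c : ℝ → ℝ) :
    (∃ ubar ubar' : ℝ → ℝ, MemE ubar ubar' ∧
        ∀ v v' : ℝ → ℝ, MemE v v' → Jace k ℓ p c ubar ubar' ≤ Jace k ℓ p c v v') ↔
      ℓ = 0 := by
  have hp0 : 0 < p := by linarith
  constructor
  · rintro ⟨u, u', hu, hmin⟩
    by_contra hℓ0
    have hlt := hu.ofReal_rpow_lt_energy hk.le (lt_of_le_of_ne hℓ (Ne.symm hℓ0)) hp0
    have hlim : Tendsto (fun n : ℕ => ENNReal.ofReal (k ^ (1 / p) + ℓ ^ (1 / p) / (n + 2)))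
        atTop (𝓝 (ENNReal.ofReal (k ^ (1 / p)))) := by
      refine ENNReal.tendsto_ofReal ?_
      have := ((tendsto_const_div_atTop_nhds_zero_nat (ℓ ^ (1 / p))).comp
        (tendsto_add_atTop_nat 2)).const_add (k ^ (1 / p))
      simpa using this
    obtain ⟨n, hn⟩ := (hlim.eventually (gt_mem_nhds hlt)).exists
    exact hn.not_ge <|
      (Jace_le_Jace_iff.1 (hmin _ _ (memE_pow n))).trans (energy_pow_le hk.le hℓ hp n)
  · rintro rfl
    refine ⟨_, _, memE_pow 0, fun v v' hv => Jace_le_Jace_iff.2 ?_⟩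
    calc energy k 0 p _ _ ≤ _ := energy_pow_le hk.le le_rfl hp 0
      _ = ENNReal.ofReal (k ^ (1 / p)) := by
          rw [Real.zero_rpow (one_div_pos.2 hp0).ne', zero_div, add_zero]
      _ ≤ energy k 0 p v v' := hv.ofReal_rpow_le_energy hk.le le_rfl hp0

/-- **Attainment criterion for a one-dimensional variational problem**
(Proposition 1.12, main part).  For `k > 0`, `ℓ ≥ 0`, `p ≥ 1`, `c ∈ L¹(0,1)`, the
infimum over `E = {u ∈ W^{1,1}(0,1) : u(0)=0, u(1)=1}` of
`J(u) = ∫₀¹ [(k|u̇|^p + ℓ|u|^p)^{1/p} + c(t)] dt` is attained iff `ℓ = 0`. -/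
theorem attainment_iff_ell_zero
    (k ℓ p : ℝ) (hk : 0 < k) (hℓ : 0 ≤ ℓ) (hp : 1 ≤ p)
    (c : ℝ → ℝ) (hc : IntegrableOn c (Set.Ioo 0 1) volume) :
    (∃ ubar ubar' : ℝ → ℝ, MemE ubar ubar' ∧
        ∀ v v' : ℝ → ℝ, MemE v v' → Jace k ℓ p c ubar ubar' ≤ Jace k ℓ p c v v') ↔
      ℓ = 0 :=
  attainment_iff_ell_zero_general k ℓ p hk hℓ hp c

end
end
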